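/- arXiv:1608.04474 — 2 statements merged into one kernel-verified Lean document; each statement's English description precedes it below -/
import Mathlib

section
/- Conditional reliability is a monotone set function of the catalyst set: if C1 ⊆ C2 then R((s,t)|C1) ≤ R((s,t)|C2), where R((s,t)|C1) = Σ_{G ⊑ 𝒢|C1} I_G(s,t)·P(G|C1) and edge probabilities P(e|C1) = 1 - ∏_{c∈C1}(1 - P(e|c)). -/
open Classical in
/-- `P(e|C1) = 1 - ∏_{c∈C1}(1 - P(e|c))`. -/
noncomputable def edgeProb {V C : Type*} (p : V × V → C → ℝ) (C1 : Finset C)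
    (e : V × V) : ℝ :=
  1 - ∏ c ∈ C1, (1 - p e c)

open Classical in
/-- Conditional reliability `R((s,t)|C1) = Σ_{G ⊑ 𝒢|C1} I_G(s,t)·P(G|C1)`, summing over
all possible worlds `G ⊆ E`, where `P(G|C1) = ∏_{e∈G} P(e|C1) · ∏_{e∈E∖G}(1-P(e|C1))`
and `I_G(s,t)` indicates that `t` is reachable from `s` using the edges of `G`. -/
noncomputable def condRel {V C : Type*} (E : Finset (V × V)) (p : V × V → C → ℝ)
    (C1 : Finset C) (s t : V) : ℝ :=
  ∑ G ∈ E.powerset,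
    (if Relation.ReflTransGen (fun u v => (u, v) ∈ G) s t then (1 : ℝ) else 0) *
      ((∏ e ∈ G, edgeProb p C1 e) * ∏ e ∈ E \ G, (1 - edgeProb p C1 e))


open Classical in
theorem rel_mono_aux {α : Type*} [DecidableEq α] (E : Finset α) (q q' : α → ℝ)
    (hq : ∀ e, 0 ≤ q e ∧ q e ≤ 1) (hq' : ∀ e, 0 ≤ q' e ∧ q' e ≤ 1)
    (hle : ∀ e, q e ≤ q' e) (f : Finset α → ℝ)
    (hf : ∀ G G' : Finset α, G ⊆ G' → f G ≤ f G') :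
    ∑ G ∈ E.powerset, f G * ((∏ e ∈ G, q e) * ∏ e ∈ E \ G, (1 - q e)) ≤
      ∑ G ∈ E.powerset, f G * ((∏ e ∈ G, q' e) * ∏ e ∈ E \ G, (1 - q' e)) := by
  classical
  induction E using Finset.induction_on generalizing f with
  | empty => simp
  | insert a s ha ih =>
    rw [Finset.sum_powerset_insert ha, Finset.sum_powerset_insert ha]
    have hsd1 : ∀ G ∈ s.powerset, insert a s \ G = insert a (s \ G) := by
      intro G hG
      have : a ∉ G := fun h => ha (Finset.mem_powerset.mp hG h)
      rw [Finset.insert_sdiff_of_notMem _ this]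
    have hsd2 : ∀ G ∈ s.powerset, insert a s \ insert a G = s \ G := by
      intro G hG
      ext x
      simp only [Finset.mem_sdiff, Finset.mem_insert]
      constructor
      · rintro ⟨hx1 | hx1, hx2⟩
        · exact absurd (Or.inl hx1) hx2
        · exact ⟨hx1, fun hxG => hx2 (Or.inr hxG)⟩
      · rintro ⟨hx1, hx2⟩
        exact ⟨Or.inr hx1, fun hc => by
          rcases hc with rfl | hc
          · exact ha hx1
          · exact hx2 hc⟩
    have key : ∀ (r : α → ℝ),
        (∑ G ∈ s.powerset, f G * ((∏ e ∈ G, r e) * ∏ e ∈ insert a s \ G, (1 - r e)) +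
         ∑ G ∈ s.powerset, f (insert a G) *
            ((∏ e ∈ insert a G, r e) * ∏ e ∈ insert a s \ insert a G, (1 - r e)))
        = (1 - r a) * ∑ G ∈ s.powerset, f G * ((∏ e ∈ G, r e) * ∏ e ∈ s \ G, (1 - r e)) +
          r a * ∑ G ∈ s.powerset, f (insert a G) *
            ((∏ e ∈ G, r e) * ∏ e ∈ s \ G, (1 - r e)) := by
      intro r
      rw [Finset.mul_sum, Finset.mul_sum]
      congr 1
      · apply Finset.sum_congr rfl
        intro G hG
        rw [hsd1 G hG, Finset.prod_insert (fun h => ha (Finset.mem_sdiff.mp h).1)]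
        ring
      · apply Finset.sum_congr rfl
        intro G hG
        have haG : a ∉ G := fun h => ha (Finset.mem_powerset.mp hG h)
        rw [hsd2 G hG, Finset.prod_insert haG]
        ring
    rw [key q, key q']
    set A := ∑ G ∈ s.powerset, f G * ((∏ e ∈ G, q e) * ∏ e ∈ s \ G, (1 - q e)) with hA
    set B := ∑ G ∈ s.powerset, f (insert a G) * ((∏ e ∈ G, q e) * ∏ e ∈ s \ G, (1 - q e)) with hB
    set A' := ∑ G ∈ s.powerset, f G * ((∏ e ∈ G, q' e) * ∏ e ∈ s \ G, (1 - q' e)) with hA'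
    set B' := ∑ G ∈ s.powerset, f (insert a G) * ((∏ e ∈ G, q' e) * ∏ e ∈ s \ G, (1 - q' e)) with hB'
    have hAA' : A ≤ A' := ih f hf
    have hBB' : B ≤ B' := ih (fun G => f (insert a G))
      (fun G G' hGG' => hf _ _ (Finset.insert_subset_insert a hGG'))
    have hAB : A ≤ B := by
      apply Finset.sum_le_sum
      intro G hG
      apply mul_le_mul_of_nonneg_right (hf G (insert a G) (Finset.subset_insert a G))
      apply mul_nonneg
      · exact Finset.prod_nonneg fun e _ => (hq e).1
      · exact Finset.prod_nonneg fun e _ => by linarith [(hq e).2]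
    have h1 : 0 ≤ q a := (hq a).1
    have h2 : q a ≤ q' a := hle a
    have h3 : q' a ≤ 1 := (hq' a).2
    nlinarith [mul_le_mul_of_nonneg_left hAA' (by linarith : (0:ℝ) ≤ 1 - q' a),
      mul_le_mul_of_nonneg_left hBB' (by linarith : (0:ℝ) ≤ q' a),
      mul_le_mul_of_nonneg_left hAB (by linarith : (0:ℝ) ≤ q' a - q a)]

open Classical in
theorem edgeProb_bounds {V C : Type*} (p : V × V → C → ℝ)
    (hp : ∀ e c, 0 ≤ p e c ∧ p e c ≤ 1) (C1 : Finset C) (e : V × V) :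
    0 ≤ edgeProb p C1 e ∧ edgeProb p C1 e ≤ 1 := by
  unfold edgeProb
  constructor
  · have : ∏ c ∈ C1, (1 - p e c) ≤ 1 :=
      Finset.prod_le_one (fun c _ => by linarith [(hp e c).2]) (fun c _ => by linarith [(hp e c).1])
    linarith
  · have : 0 ≤ ∏ c ∈ C1, (1 - p e c) :=
      Finset.prod_nonneg fun c _ => by linarith [(hp e c).2]
    linarith

open Classical in
theorem edgeProb_mono {V C : Type*} (p : V × V → C → ℝ)
    (hp : ∀ e c, 0 ≤ p e c ∧ p e c ≤ 1) {C1 C2 : Finset C} (h : C1 ⊆ C2) (e : V × V) :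
    edgeProb p C1 e ≤ edgeProb p C2 e := by
  unfold edgeProb
  have key : ∏ c ∈ C2, (1 - p e c) ≤ ∏ c ∈ C1, (1 - p e c) := by
    rw [← Finset.prod_sdiff h]
    have h1 : ∏ c ∈ C2 \ C1, (1 - p e c) ≤ 1 :=
      Finset.prod_le_one (fun c _ => by linarith [(hp e c).2]) (fun c _ => by linarith [(hp e c).1])
    have h2 : 0 ≤ ∏ c ∈ C1, (1 - p e c) :=
      Finset.prod_nonneg fun c _ => by linarith [(hp e c).2]
    calc (∏ c ∈ C2 \ C1, (1 - p e c)) * ∏ c ∈ C1, (1 - p e c)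
        ≤ 1 * ∏ c ∈ C1, (1 - p e c) := by
          apply mul_le_mul_of_nonneg_right h1 h2
      _ = ∏ c ∈ C1, (1 - p e c) := one_mul _
  linarith

/-- Conditional reliability is monotone in the catalyst set. -/
theorem condRel_monotone {V C : Type*} (E : Finset (V × V)) (p : V × V → C → ℝ)
    (hp : ∀ e c, 0 ≤ p e c ∧ p e c ≤ 1) (s t : V) (C1 C2 : Finset C) (h : C1 ⊆ C2) :
    condRel E p C1 s t ≤ condRel E p C2 s t := by
  classical
  unfold condRel
  apply rel_mono_aux E (edgeProb p C1) (edgeProb p C2)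
    (edgeProb_bounds p hp C1) (edgeProb_bounds p hp C2)
    (edgeProb_mono p hp h)
  intro G G' hGG'
  split_ifs with h1 h2
  · exact le_refl 1
  · exact absurd (Relation.ReflTransGen.mono (fun u v huv => hGG' huv) s t h1) h2
  · exact zero_le_one
  · exact le_refl 0
end

section
/- Conditional reliability is not a submodular function of the catalyst set: there exists an uncertain graph 𝒢 = (V,E,C,P), nodes s,t, catalyst sets A ⊆ B ⊆ C and a catalyst x ∉ B with R((s,t)|A∪{x}) - R((s,t)|A) < R((s,t)|B∪{x}) - R((s,t)|B). Concretely, with nodes {s,u,v,t}, edges e1=(s,u), e2=(u,t), e3=(s,v), e4=(v,t) (paths s→u→t and s→v→t), catalysts {c1,c2,c3}, probabilities P(e1|c1)=0.5, P(e2|c2)=0.6, P(e3|c3)=0.5, P(e4|c1)=0.5, and all other edge-catalyst probabilities 0, taking A={c2} and B={c1,c2} and x=c3 gives R((s,t)|A)=0, R((s,t)|A∪{c3})=0, R((s,t)|B)=0.3, R((s,t)|B∪{c3})=0.475, violating submodularity. -/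
/-- The concrete counterexample of Figure 2: nodes `s=0, u=1, v=2, t=3`, paths
`s→u→t` and `s→v→t`, catalysts `c1=0, c2=1, c3=2`, with
`P(e1|c1)=0.5, P(e2|c2)=0.6, P(e3|c3)=0.5, P(e4|c1)=0.5` (all others `0`). -/
noncomputable def pEx : Fin 4 × Fin 4 → Fin 3 → ℝ := fun e c =>
  if e = (0, 1) ∧ c = 0 then 0.5
  else if e = (1, 3) ∧ c = 1 then 0.6
  else if e = (0, 2) ∧ c = 2 then 0.5
  else if e = (2, 3) ∧ c = 0 then 0.5
  else 0

def Eex : Finset (Fin 4 × Fin 4) := {(0, 1), (1, 3), (0, 2), (2, 3)}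

lemma reach_iff (G : Finset (Fin 4 × Fin 4)) (hG : G ⊆ Eex) :
    Relation.ReflTransGen (fun u v => (u, v) ∈ G) 0 3 ↔
      (((0:Fin 4), (1:Fin 4)) ∈ G ∧ ((1:Fin 4), (3:Fin 4)) ∈ G) ∨
      (((0:Fin 4), (2:Fin 4)) ∈ G ∧ ((2:Fin 4), (3:Fin 4)) ∈ G) := by
  constructor
  · intro h
    have key : ∀ a : Fin 4, Relation.ReflTransGen (fun u v => (u, v) ∈ G) a 3 →
        (if a = 3 then True else if a = 1 then ((1:Fin 4), (3:Fin 4)) ∈ G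
         else if a = 2 then ((2:Fin 4), (3:Fin 4)) ∈ G
         else if a = 0 then
          ((((0:Fin 4), (1:Fin 4)) ∈ G ∧ ((1:Fin 4), (3:Fin 4)) ∈ G) ∨
           (((0:Fin 4), (2:Fin 4)) ∈ G ∧ ((2:Fin 4), (3:Fin 4)) ∈ G)) else True) := by
      intro a ha
      induction ha using Relation.ReflTransGen.head_induction_on with
      | refl => simp
      | head hab _ ih =>
        rename_i x y _
        have hxy := hG hab
        simp only [Eex, Finset.mem_insert, Finset.mem_singleton, Prod.ext_iff] at hxy
        rcases hxy with ⟨hx, hy⟩ | ⟨hx, hy⟩ | ⟨hx, hy⟩ | ⟨hx, hy⟩ <;>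
          subst hx <;> subst hy <;> simp_all
    simpa using key 0 h
  · rintro (⟨h1, h2⟩ | ⟨h1, h2⟩)
    · exact Relation.ReflTransGen.head h1 (Relation.ReflTransGen.single h2)
    · exact Relation.ReflTransGen.head h1 (Relation.ReflTransGen.single h2)

lemma prod_sdiff_eq {α : Type*} [DecidableEq α] (E G : Finset α) (hG : G ⊆ E) (f : α → ℝ) :
    ∏ e ∈ E \ G, f e = ∏ e ∈ E, if e ∈ G then 1 else f e := by
  rw [← Finset.prod_sdiff hG]
  have h1 : ∏ e ∈ G, (if e ∈ G then (1:ℝ) else f e) = 1 :=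
    Finset.prod_eq_one fun e he => if_pos he
  have h2 : ∏ e ∈ E \ G, (if e ∈ G then (1:ℝ) else f e) = ∏ e ∈ E \ G, f e :=
    Finset.prod_congr rfl fun e he => if_neg (Finset.mem_sdiff.mp he).2
  rw [h1, h2, mul_one]

lemma condRel_ex (C1 : Finset (Fin 3)) :
    condRel Eex pEx C1 0 3 =
      ∑ G ∈ Eex.powerset,
        (if (((0:Fin 4), (1:Fin 4)) ∈ G ∧ ((1:Fin 4), (3:Fin 4)) ∈ G) ∨
            (((0:Fin 4), (2:Fin 4)) ∈ G ∧ ((2:Fin 4), (3:Fin 4)) ∈ G) then (1:ℝ) else 0) *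
          ((∏ e ∈ G, edgeProb pEx C1 e) *
            ∏ e ∈ Eex, if e ∈ G then 1 else (1 - edgeProb pEx C1 e)) := by
  unfold condRel
  refine Finset.sum_congr rfl fun G hG => ?_
  rw [Finset.mem_powerset] at hG
  congr 1
  · simp only [reach_iff G hG]
  · rw [mul_eq_mul_left_iff]
    left
    convert prod_sdiff_eq Eex G hG (fun e => 1 - edgeProb pEx C1 e) using 2
    ext e
    simp [Finset.mem_sdiff]

lemma q1 (e : Fin 4 × Fin 4) : edgeProb pEx {1} e = if e = (1,3) then 0.6 else 0 := by
  simp only [edgeProb, pEx, Finset.prod_singleton]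
  fin_cases e <;> norm_num [Prod.ext_iff, Fin.ext_iff]

lemma q2 (e : Fin 4 × Fin 4) : edgeProb pEx (insert 2 {1}) e =
    if e = (1,3) then 0.6 else if e = (0,2) then 0.5 else 0 := by
  simp (config := { decide := true }) only [edgeProb, pEx, Finset.prod_insert,
    Finset.prod_singleton, Finset.mem_singleton]
  fin_cases e <;> norm_num [Prod.ext_iff, Fin.ext_iff]

lemma q3 (e : Fin 4 × Fin 4) : edgeProb pEx {0, 1} e =
    if e = (0,1) then 0.5 else if e = (1,3) then 0.6 else if e = (2,3) then 0.5 else 0 := by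
  simp (config := { decide := true }) only [edgeProb, pEx, Finset.prod_insert,
    Finset.prod_singleton, Finset.mem_singleton]
  fin_cases e <;> norm_num [Prod.ext_iff, Fin.ext_iff]

lemma q4 (e : Fin 4 × Fin 4) : edgeProb pEx (insert 2 {0, 1}) e =
    if e = (0,1) then 0.5 else if e = (1,3) then 0.6 else if e = (0,2) then 0.5
    else if e = (2,3) then 0.5 else 0 := by
  simp (config := { decide := true }) only [edgeProb, pEx, Finset.prod_insert,
    Finset.prod_singleton, Finset.mem_singleton, Finset.mem_insert]
  fin_cases e <;> norm_num [Prod.ext_iff, Fin.ext_iff]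

lemma pows : ({((2:Fin 4),(3:Fin 4))} : Finset (Fin 4 × Fin 4)).powerset = {∅, {(2,3)}} := by
  decide

set_option maxHeartbeats 1000000 in
lemma val1 : condRel Eex pEx {1} 0 3 = 0 := by
  rw [condRel_ex]
  simp only [q1]
  unfold Eex
  simp (config := { decide := true }) only [Finset.sum_powerset_insert,
    pows, Finset.sum_insert, Finset.sum_singleton,
    Finset.prod_insert, Finset.prod_singleton, Finset.prod_empty,
    Finset.mem_insert, Finset.mem_singleton, Finset.insert_ne_empty]
  norm_num [Prod.ext_iff, Fin.ext_iff]

set_option maxHeartbeats 1000000 in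
lemma val2 : condRel Eex pEx (insert 2 {1}) 0 3 = 0 := by
  rw [condRel_ex]
  simp only [q2]
  unfold Eex
  simp (config := { decide := true }) only [Finset.sum_powerset_insert,
    pows, Finset.sum_insert, Finset.sum_singleton,
    Finset.prod_insert, Finset.prod_singleton, Finset.prod_empty,
    Finset.mem_insert, Finset.mem_singleton, Finset.insert_ne_empty]
  norm_num

set_option maxHeartbeats 1000000 in
lemma val3 : condRel Eex pEx {0, 1} 0 3 = 0.3 := by
  rw [condRel_ex]
  simp only [q3]
  unfold Eex
  simp (config := { decide := true }) only [Finset.sum_powerset_insert,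
    pows, Finset.sum_insert, Finset.sum_singleton,
    Finset.prod_insert, Finset.prod_singleton, Finset.prod_empty,
    Finset.mem_insert, Finset.mem_singleton, Finset.insert_ne_empty]
  norm_num [Fin.ext_iff]

set_option maxHeartbeats 1000000 in
lemma val4 : condRel Eex pEx (insert 2 {0, 1}) 0 3 = 0.475 := by
  rw [condRel_ex]
  simp only [q4]
  unfold Eex
  simp (config := { decide := true }) only [Finset.sum_powerset_insert,
    pows, Finset.sum_insert, Finset.sum_singleton,
    Finset.prod_insert, Finset.prod_singleton, Finset.prod_empty,
    Finset.mem_insert, Finset.mem_singleton, Finset.insert_ne_empty]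
  norm_num

/-- Conditional reliability is not submodular: there are an uncertain graph, nodes `s,t`,
catalyst sets `A ⊆ B` and `x ∉ B` violating the submodularity inequality; concretely, on
the graph above with `A={c2}`, `B={c1,c2}`, `x=c3`, the four reliabilities are
`0, 0, 0.3, 0.475`, so `R(A∪{x}) - R(A) < R(B∪{x}) - R(B)`. -/
theorem condRel_not_submodular :
    ∃ (V C : Type) (_ : DecidableEq C) (E : Finset (V × V)) (p : V × V → C → ℝ) (s t : V)
      (A B : Finset C) (x : C), A ⊆ B ∧ x ∉ B ∧
        condRel E p (insert x A) s t - condRel E p A s t <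
          condRel E p (insert x B) s t - condRel E p B s t ∧
        V = Fin 4 ∧ C = Fin 3 ∧
        HEq E ({((0 : Fin 4), (1 : Fin 4)), (1, 3), (0, 2), (2, 3)} : Finset (Fin 4 × Fin 4)) ∧
        HEq p pEx ∧
        condRel ({((0 : Fin 4), (1 : Fin 4)), (1, 3), (0, 2), (2, 3)} : Finset (Fin 4 × Fin 4))
            pEx {1} 0 3 = 0 ∧
        condRel ({((0 : Fin 4), (1 : Fin 4)), (1, 3), (0, 2), (2, 3)} : Finset (Fin 4 × Fin 4))
            pEx (insert 2 {1}) 0 3 = 0 ∧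
        condRel ({((0 : Fin 4), (1 : Fin 4)), (1, 3), (0, 2), (2, 3)} : Finset (Fin 4 × Fin 4))
            pEx {0, 1} 0 3 = 0.3 ∧
        condRel ({((0 : Fin 4), (1 : Fin 4)), (1, 3), (0, 2), (2, 3)} : Finset (Fin 4 × Fin 4))
            pEx (insert 2 {0, 1}) 0 3 = 0.475 := by
  refine ⟨Fin 4, Fin 3, inferInstance, Eex, pEx, 0, 3, {1}, {0, 1}, 2,
      by decide, by decide, ?_, rfl, rfl, HEq.rfl, HEq.rfl, val1, val2, val3, val4⟩
  rw [val1, val2, val3, val4]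
  norm_num [Prod.ext_iff, Fin.ext_iff]
end
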